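/- arXiv:1306.5875 — 2 statements merged into one kernel-verified Lean document; each statement's English description precedes it below -/
import Mathlib

section
/- Let a₁, a₂, a₃, a₄ be pairwise distinct complex numbers, set k² = ((a₄−a₁)(a₃−a₂))/((a₄−a₂)(a₃−a₁)) and k'² = 1 − k². Assume k² ≠ 0. Define A₁ = (a₄ − k'²a₁)/k², A₂ = k²a₁a₄/(k'²a₁ − a₄), A₃ = (k'²a₄ − a₁)/k². Then a₃ = A₁·(a₂ + A₂)/(a₂ + A₃), provided k'²a₁ − a₄ ≠ 0 and a₂ + A₃ ≠ 0. -/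
/-! The defining relation `k² (a₄ - a₂)(a₃ - a₁) = (a₄ - a₁)(a₃ - a₂)` of the cross ratio is affine
in `a₃`. Its coefficient is `-k² (a₂ + A₃)` and its constant term is `-k² A₁ (a₂ + A₂)`, so solving
for `a₃` gives the Möbius transformation. -/

section CrossRatio

variable {K : Type*} [Field K] {k k' a₁ a₂ a₃ a₄ A₁ A₂ A₃ : K}

theorem cross_ratio_coeff_eq (hk' : k' = 1 - k) (hA₃ : A₃ * k = k' * a₄ - a₁) :
    k * (a₄ - a₂) - (a₄ - a₁) = -k * (a₂ + A₃) := by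
  linear_combination hA₃ + a₄ * hk'

theorem cross_ratio_const_eq (hk' : k' = 1 - k) (hA₁ : A₁ * k = a₄ - k' * a₁)
    (hA₂ : A₂ * (k' * a₁ - a₄) = k * a₁ * a₄) :
    k * a₁ * (a₄ - a₂) - a₂ * (a₄ - a₁) = -k * (A₁ * (a₂ + A₂)) := by
  linear_combination (a₂ + A₂) * hA₁ - hA₂ - a₁ * a₂ * hk'

theorem mul_add_eq_of_cross_ratio (hk : k ≠ 0) (hk' : k' = 1 - k)
    (hA₁ : A₁ * k = a₄ - k' * a₁) (hA₂ : A₂ * (k' * a₁ - a₄) = k * a₁ * a₄)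
    (hA₃ : A₃ * k = k' * a₄ - a₁)
    (hcross : k * ((a₄ - a₂) * (a₃ - a₁)) = (a₄ - a₁) * (a₃ - a₂)) :
    a₃ * (a₂ + A₃) = A₁ * (a₂ + A₂) := by
  have hlin : a₃ * (k * (a₄ - a₂) - (a₄ - a₁)) = k * a₁ * (a₄ - a₂) - a₂ * (a₄ - a₁) := by
    linear_combination hcross
  rw [cross_ratio_coeff_eq hk' hA₃, cross_ratio_const_eq hk' hA₁ hA₂, mul_left_comm] at hlin
  exact mul_left_cancel₀ (neg_ne_zero.2 hk) hlin

end CrossRatio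

theorem a3_moebius_general (a₁ a₂ a₃ a₄ : ℂ)
    (h13 : a₁ ≠ a₃)
    (h24 : a₂ ≠ a₄)
    (k2 : ℂ) (hk2 : k2 = ((a₄ - a₁) * (a₃ - a₂)) / ((a₄ - a₂) * (a₃ - a₁)))
    (k2' : ℂ) (hk2' : k2' = 1 - k2) (hk0 : k2 ≠ 0)
    (A₁ A₂ A₃ : ℂ)
    (hA₁ : A₁ = (a₄ - k2' * a₁) / k2)
    (hA₂ : A₂ = k2 * a₁ * a₄ / (k2' * a₁ - a₄))
    (hA₃ : A₃ = (k2' * a₄ - a₁) / k2)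
    (hden1 : k2' * a₁ - a₄ ≠ 0) (hden2 : a₂ + A₃ ≠ 0) :
    a₃ = A₁ * (a₂ + A₂) / (a₂ + A₃) := by
  have hd : (a₄ - a₂) * (a₃ - a₁) ≠ 0 :=
    mul_ne_zero (sub_ne_zero.2 h24.symm) (sub_ne_zero.2 h13.symm)
  rw [eq_div_iff hden2]
  exact mul_add_eq_of_cross_ratio hk0 hk2' ((eq_div_iff hk0).1 hA₁) ((eq_div_iff hden1).1 hA₂)
    ((eq_div_iff hk0).1 hA₃) ((eq_div_iff hd).1 hk2)

theorem a3_moebius (a₁ a₂ a₃ a₄ : ℂ)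
    (h12 : a₁ ≠ a₂) (h13 : a₁ ≠ a₃) (h14 : a₁ ≠ a₄)
    (h23 : a₂ ≠ a₃) (h24 : a₂ ≠ a₄) (h34 : a₃ ≠ a₄)
    (k2 : ℂ) (hk2 : k2 = ((a₄ - a₁) * (a₃ - a₂)) / ((a₄ - a₂) * (a₃ - a₁)))
    (k2' : ℂ) (hk2' : k2' = 1 - k2) (hk0 : k2 ≠ 0)
    (A₁ A₂ A₃ : ℂ)
    (hA₁ : A₁ = (a₄ - k2' * a₁) / k2)
    (hA₂ : A₂ = k2 * a₁ * a₄ / (k2' * a₁ - a₄))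
    (hA₃ : A₃ = (k2' * a₄ - a₁) / k2)
    (hden1 : k2' * a₁ - a₄ ≠ 0) (hden2 : a₂ + A₃ ≠ 0) :
    a₃ = A₁ * (a₂ + A₂) / (a₂ + A₃) :=
  a3_moebius_general a₁ a₂ a₃ a₄ h13 h24 k2 hk2 k2' hk2' hk0 A₁ A₂ A₃ hA₁ hA₂ hA₃ hden1 hden2
end

section
/- Let a₁, a₄, and k², k'² = 1 − k² be complex numbers with k² ≠ 0 and a₁ ≠ a₄, let s be a complex number, define ã₂ = a₄ − (a₄ − a₁)·s² and ã₃ = A₁·(ã₂ + A₂)/(ã₂ + A₃) where A₁ = (a₄ − k'²a₁)/k², A₂ = k²a₁a₄/(k'²a₁ − a₄), A₃ = (k'²a₄ − a₁)/k². Then, assuming all relevant denominators are nonzero, ((a₄ − a₁)(ã₃ − ã₂))/((a₄ − ã₂)(ã₃ − a₁)) = k² and (a₄ − ã₂)/(a₄ − a₁) = s². -/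
/-!
The cross-ratio condition `(a₄ - a₁)(x - t) = k²(a₄ - t)(x - a₁)` is linear in `x`; solving it
gives `x = (t (a₄ - k'² a₁) - k² a₁ a₄) / (k² t + k'² a₄ - a₁)`, and dividing numerator and
denominator by `k²` (using `A₁ A₂ = -a₁ a₄`) yields exactly the Möbius map `t ↦ A₁ (t + A₂) / (t + A₃)`.
-/

section CrossRatio

variable {K : Type*} [Field K]

theorem cross_ratio_eq_of_mul_eq {a₁ a₄ k k' t x : K} (hk' : k' = 1 - k)
    (hx : x * (k * t + (k' * a₄ - a₁)) = t * (a₄ - k' * a₁) - k * a₁ * a₄)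
    (hne : (a₄ - t) * (x - a₁) ≠ 0) :
    (a₄ - a₁) * (x - t) / ((a₄ - t) * (x - a₁)) = k := by
  rw [div_eq_iff hne]
  subst hk'
  linear_combination hx

theorem mobius_mul_eq {a₁ a₄ k k' t : K} (hk : k ≠ 0) (hden : k' * a₁ - a₄ ≠ 0)
    (ht : t + (k' * a₄ - a₁) / k ≠ 0) :
    (a₄ - k' * a₁) / k * (t + k * a₁ * a₄ / (k' * a₁ - a₄)) / (t + (k' * a₄ - a₁) / k)
        * (k * t + (k' * a₄ - a₁)) = t * (a₄ - k' * a₁) - k * a₁ * a₄ := by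
  have hnum : (a₄ - k' * a₁) / k * (t + k * a₁ * a₄ / (k' * a₁ - a₄))
      = (t * (a₄ - k' * a₁) - k * a₁ * a₄) / k := by
    field_simp
    ring
  have hden' : t + (k' * a₄ - a₁) / k = (k * t + (k' * a₄ - a₁)) / k := by
    field_simp
  have hkt : k * t + (k' * a₄ - a₁) ≠ 0 := by
    rw [hden'] at ht
    exact (div_ne_zero_iff.mp ht).1
  rw [hnum, hden', div_div_div_cancel_right₀ hk, div_mul_cancel₀ _ hkt]

theorem div_sub_eq_sq_of_eq_sub_mul {a₁ a₄ t s : K} (ha : a₁ ≠ a₄)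
    (ht : t = a₄ - (a₄ - a₁) * s ^ 2) : (a₄ - t) / (a₄ - a₁) = s ^ 2 := by
  rw [ht, sub_sub_cancel, mul_div_cancel_left₀ _ (sub_ne_zero.mpr ha.symm)]

end CrossRatio

theorem perturbed_tuple_same_modulus (a₁ a₄ k2 k2' s : ℂ)
    (hk2' : k2' = 1 - k2) (hk0 : k2 ≠ 0) (h14 : a₁ ≠ a₄)
    (A₁ A₂ A₃ ta₂ ta₃ : ℂ)
    (hA₁ : A₁ = (a₄ - k2' * a₁) / k2)
    (hA₂ : A₂ = k2 * a₁ * a₄ / (k2' * a₁ - a₄))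
    (hA₃ : A₃ = (k2' * a₄ - a₁) / k2)
    (hta₂ : ta₂ = a₄ - (a₄ - a₁) * s ^ 2)
    (hta₃ : ta₃ = A₁ * (ta₂ + A₂) / (ta₂ + A₃))
    (hden1 : k2' * a₁ - a₄ ≠ 0) (hden2 : ta₂ + A₃ ≠ 0)
    (hden3 : a₄ - ta₂ ≠ 0) (hden4 : ta₃ - a₁ ≠ 0) :
    ((a₄ - a₁) * (ta₃ - ta₂)) / ((a₄ - ta₂) * (ta₃ - a₁)) = k2 ∧
    (a₄ - ta₂) / (a₄ - a₁) = s ^ 2 := by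
  subst hA₁ hA₂ hA₃
  refine ⟨cross_ratio_eq_of_mul_eq hk2' ?_ (mul_ne_zero hden3 hden4),
    div_sub_eq_sq_of_eq_sub_mul h14 hta₂⟩
  rw [hta₃]
  exact mobius_mul_eq hk0 hden1 hden2
end
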